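/- arXiv:2405.01045 — 4 statements merged into one kernel-verified Lean document; each statement's English description precedes it below -/
import Mathlib

section
/- Let α ∈ (0,1). There exists a constant C > 0 (depending only on α) such that for all x ∈ ℝ², the Kraichnan covariance satisfies |Q(0) − Q(x)| ≤ C (|x|^{2α} ∧ 1), where |·| denotes a matrix norm and a ∧ b = min{a,b}. -/
/-!
The integrand of `Q(0) - Q(x)` is `g(ξ) P(ξ) (1 - cos 2π x·ξ)` with
`g(ξ) = (1 + |ξ|²)^{-(1+α)}` integrable on `ℝ²` and `|P_ij| ≤ 2`, so the increment is at most
`4π² ∫ g(ξ) min(|x|²|ξ|², 1) dξ`. This is bounded by `4π² ∫ g`, and in polar coordinates it equals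
`8π³ ∫₀^∞ r g(r) min(|x|² r², 1) dr`; splitting at `r = 1/|x|` and using `g(r) ≤ r^{-2-2α}`
bounds the radial integral by a multiple of `|x|^{2α}` (the pieces converge because `0 < α < 1`).
-/

open MeasureTheory Real

noncomputable section

/-- The Kraichnan covariance matrix `Q(x)`, stated entrywise.  Since the defining integrand
is even in `ξ`, the oscillatory factor `e^{2πi x·ξ}` may equivalently be replaced by
`cos(2π x·ξ)`. -/
def kraichnanQ (α : ℝ) (x : EuclideanSpace ℝ (Fin 2)) (i j : Fin 2) : ℝ :=
  ∫ ξ : EuclideanSpace ℝ (Fin 2),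
    (1 + ‖ξ‖ ^ 2) ^ (-(1 + α)) * ((if i = j then (1:ℝ) else 0) - ξ i * ξ j / ‖ξ‖ ^ 2)
      * Real.cos (2 * π * (inner ℝ x ξ : ℝ))

open Set

local notation "E2" => EuclideanSpace ℝ (Fin 2)

lemma setIntegral_Ioi_le_of_le_on_Ioc_of_le_on_Ioi {f a b : ℝ → ℝ} {R : ℝ} (hR : 0 ≤ R)
    (hf : Measurable f) (hf₀ : ∀ y ∈ Ioi 0, 0 ≤ f y)
    (ha : IntegrableOn a (Ioc 0 R)) (hb : IntegrableOn b (Ioi R))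
    (hfa : ∀ y ∈ Ioc 0 R, f y ≤ a y) (hfb : ∀ y ∈ Ioi R, f y ≤ b y) :
    ∫ y in Ioi 0, f y ≤ (∫ y in Ioc 0 R, a y) + ∫ y in Ioi R, b y := by
  have hfa' : IntegrableOn f (Ioc 0 R) := ha.mono' hf.aestronglyMeasurable.restrict <|
    (ae_restrict_mem measurableSet_Ioc).mono fun y hy ↦ by
      rw [norm_of_nonneg (hf₀ y hy.1)]; exact hfa y hy
  have hfb' : IntegrableOn f (Ioi R) := hb.mono' hf.aestronglyMeasurable.restrict <|
    (ae_restrict_mem measurableSet_Ioi).mono fun y hy ↦ by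
      rw [norm_of_nonneg (hf₀ y (hR.trans_lt hy))]; exact hfb y hy
  rw [← Ioc_union_Ioi_eq_Ioi hR, setIntegral_union (Ioc_disjoint_Ioi le_rfl) measurableSet_Ioi
    hfa' hfb']
  exact add_le_add (setIntegral_mono_on hfa' ha measurableSet_Ioc hfa)
    (setIntegral_mono_on hfb' hb measurableSet_Ioi hfb)

section OneDimensional

variable {α t : ℝ}

lemma mul_one_add_sq_rpow_neg_le (hα : -1 ≤ α) {y : ℝ} (hy : 0 < y) :
    y * (1 + y ^ 2) ^ (-(1 + α)) ≤ y ^ (-1 - 2 * α) := by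
  calc y * (1 + y ^ 2) ^ (-(1 + α)) ≤ y * (y ^ 2) ^ (-(1 + α)) :=
        mul_le_mul_of_nonneg_left
          (rpow_le_rpow_of_nonpos (by positivity) (by linarith) (by linarith)) hy.le
    _ = y ^ (1 : ℝ) * y ^ ((2 : ℕ) * -(1 + α)) := by rw [rpow_one, rpow_mul hy.le, rpow_natCast]
    _ = y ^ (-1 - 2 * α) := by rw [← rpow_add hy]; push_cast; ring_nf

lemma mul_one_add_sq_rpow_neg_mul_min_le (hα : -1 ≤ α) {y : ℝ} (hy : 0 < y) :
    y * ((1 + y ^ 2) ^ (-(1 + α)) * min (t ^ 2 * y ^ 2) 1) ≤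
      min (t ^ 2 * y ^ (1 - 2 * α)) (y ^ (-1 - 2 * α)) := by
  have hsq : y ^ (-1 - 2 * α) * y ^ 2 = y ^ (1 - 2 * α) := by
    rw [← rpow_natCast, ← rpow_add hy]; push_cast; ring_nf
  calc y * ((1 + y ^ 2) ^ (-(1 + α)) * min (t ^ 2 * y ^ 2) 1)
      = y * (1 + y ^ 2) ^ (-(1 + α)) * min (t ^ 2 * y ^ 2) 1 := by ring
    _ ≤ y ^ (-1 - 2 * α) * min (t ^ 2 * y ^ 2) 1 :=
        mul_le_mul_of_nonneg_right (mul_one_add_sq_rpow_neg_le hα hy)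
          (le_min (by positivity) zero_le_one)
    _ = min (t ^ 2 * y ^ (1 - 2 * α)) (y ^ (-1 - 2 * α)) := by
        rw [mul_min_of_nonneg _ _ (rpow_nonneg hy.le _), ← hsq]; ring_nf

lemma setIntegral_Ioc_rpow (hα : α < 1) {R : ℝ} (hR : 0 ≤ R) :
    ∫ y in Ioc 0 R, y ^ (1 - 2 * α) = R ^ (2 - 2 * α) / (2 - 2 * α) := by
  rw [← intervalIntegral.integral_of_le hR, integral_rpow (Or.inl (by linarith)),
    zero_rpow (by linarith)]
  ring_nf

lemma integral_Ioi_mul_one_add_sq_rpow_neg_mul_min_le (hα₀ : 0 < α) (hα₁ : α < 1)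
    (ht : 0 < t) :
    ∫ y in Ioi 0, y * ((1 + y ^ 2) ^ (-(1 + α)) * min (t ^ 2 * y ^ 2) 1) ≤
      (1 / (2 - 2 * α) + 1 / (2 * α)) * t ^ (2 * α) := by
  have hR : 0 < t⁻¹ := inv_pos.mpr ht
  have hlow : IntegrableOn (fun y ↦ t ^ 2 * y ^ (1 - 2 * α)) (Ioc 0 t⁻¹) := by
    refine Integrable.const_mul ?_ _
    exact (intervalIntegrable_iff_integrableOn_Ioc_of_le hR.le).mp
      (intervalIntegral.intervalIntegrable_rpow' (by linarith))
  have hhigh : IntegrableOn (fun y ↦ y ^ (-1 - 2 * α)) (Ioi t⁻¹) :=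
    integrableOn_Ioi_rpow_of_lt (by linarith) hR
  refine (setIntegral_Ioi_le_of_le_on_Ioc_of_le_on_Ioi hR.le (by fun_prop)
    (fun y (hy : 0 < y) ↦ by have := min_le_left (t ^ 2 * y ^ 2) 1; positivity)
    hlow hhigh
    (fun y hy ↦ (mul_one_add_sq_rpow_neg_mul_min_le (by linarith) hy.1).trans (min_le_left _ _))
    (fun y hy ↦ (mul_one_add_sq_rpow_neg_mul_min_le (by linarith) (hR.trans hy)).trans
      (min_le_right _ _))).trans_eq ?_
  rw [integral_const_mul, setIntegral_Ioc_rpow hα₁ hR.le, integral_Ioi_rpow_of_lt (by linarith) hR,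
    inv_rpow ht.le, inv_rpow ht.le, ← rpow_neg ht.le, ← rpow_neg ht.le]
  have hsq : t ^ 2 * t ^ (-(2 - 2 * α)) = t ^ (2 * α) := by
    rw [← rpow_natCast, ← rpow_add ht]; push_cast; ring_nf
  rw [show -(-1 - 2 * α + 1) = 2 * α by ring, ← hsq,
    show -1 - 2 * α + 1 = -(2 * α) by ring]
  field_simp

end OneDimensional

lemma one_sub_cos_le_min (θ : ℝ) : 1 - cos θ ≤ min (θ ^ 2 / 2) 2 :=
  le_min (by linarith [one_sub_sq_div_two_le_cos (x := θ)]) (by linarith [neg_one_le_cos θ])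

lemma abs_one_sub_cos_two_pi_inner_le {E : Type*} [NormedAddCommGroup E] [InnerProductSpace ℝ E]
    (x ξ : E) : |1 - cos (2 * π * inner ℝ x ξ)| ≤ 2 * π ^ 2 * min (‖x‖ ^ 2 * ‖ξ‖ ^ 2) 1 := by
  have hπ : 1 ≤ π ^ 2 := by nlinarith [pi_gt_three]
  have hinner : inner ℝ x ξ ^ 2 ≤ ‖x‖ ^ 2 * ‖ξ‖ ^ 2 := by
    rw [← mul_pow, ← sq_abs]
    exact pow_le_pow_left₀ (abs_nonneg _) (abs_real_inner_le_norm x ξ) 2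
  rw [abs_of_nonneg (sub_nonneg.mpr (cos_le_one _))]
  refine (one_sub_cos_le_min _).trans ?_
  rcases le_total (‖x‖ ^ 2 * ‖ξ‖ ^ 2) 1 with h | h
  · rw [min_eq_left h]
    exact (min_le_left _ _).trans (by nlinarith)
  · rw [min_eq_right h]
    exact (min_le_right _ _).trans (by nlinarith)

lemma abs_kronecker_sub_mul_div_norm_sq_le {ι : Type*} [Fintype ι] [DecidableEq ι]
    (ξ : EuclideanSpace ℝ ι) (i j : ι) :
    |(if i = j then (1:ℝ) else 0) - ξ i * ξ j / ‖ξ‖ ^ 2| ≤ 2 := by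
  have hδ : |(if i = j then (1:ℝ) else 0)| ≤ 1 := by split_ifs <;> simp
  have hprod : |ξ i * ξ j / ‖ξ‖ ^ 2| ≤ 1 := by
    rw [abs_div, abs_mul, abs_of_nonneg (sq_nonneg ‖ξ‖)]
    refine div_le_one_of_le₀ ?_ (sq_nonneg _)
    rw [sq]
    exact mul_le_mul (PiLp.norm_apply_le ξ i) (PiLp.norm_apply_le ξ j) (abs_nonneg _)
      (norm_nonneg _)
  linarith [abs_sub (if i = j then (1:ℝ) else 0) (ξ i * ξ j / ‖ξ‖ ^ 2)]

def kraichnanMajorant (α t : ℝ) : ℝ :=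
  ∫ ξ : E2, (1 + ‖ξ‖ ^ 2) ^ (-(1 + α)) * min (t ^ 2 * ‖ξ‖ ^ 2) 1

section Kraichnan

variable {α : ℝ}

lemma integrable_one_add_norm_sq_rpow_neg (hα : 0 < α) :
    Integrable fun ξ : E2 ↦ (1 + ‖ξ‖ ^ 2) ^ (-(1 + α)) := by
  have h := integrable_rpow_neg_one_add_norm_sq (E := E2) (μ := volume) (r := 2 * (1 + α))
    (by simp; linarith)
  simpa [show -(2 * (1 + α)) / 2 = -(1 + α) by ring] using h

lemma integrable_kraichnanQ_integrand (hα : 0 < α) (x : E2) (i j : Fin 2) :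
    Integrable fun ξ : E2 ↦ (1 + ‖ξ‖ ^ 2) ^ (-(1 + α)) *
      ((if i = j then (1:ℝ) else 0) - ξ i * ξ j / ‖ξ‖ ^ 2) * cos (2 * π * inner ℝ x ξ) := by
  refine ((integrable_one_add_norm_sq_rpow_neg hα).mul_const 2).mono' (by fun_prop) ?_
  refine Filter.Eventually.of_forall fun ξ ↦ ?_
  rw [norm_mul, norm_mul, norm_of_nonneg (by positivity)]
  exact (mul_le_mul (mul_le_mul_of_nonneg_left (abs_kronecker_sub_mul_div_norm_sq_le ξ i j)
    (by positivity)) (abs_cos_le_one _) (abs_nonneg _) (by positivity)).trans_eq (mul_one _)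

lemma integrable_kraichnanMajorant_integrand (hα : 0 < α) (t : ℝ) :
    Integrable fun ξ : E2 ↦ (1 + ‖ξ‖ ^ 2) ^ (-(1 + α)) * min (t ^ 2 * ‖ξ‖ ^ 2) 1 := by
  refine (integrable_one_add_norm_sq_rpow_neg hα).mono' (by fun_prop)
    (Filter.Eventually.of_forall fun ξ ↦ ?_)
  rw [norm_of_nonneg (mul_nonneg (by positivity) (le_min (by positivity) zero_le_one))]
  exact mul_le_of_le_one_right (by positivity) (min_le_right _ _)

lemma abs_kraichnanQ_zero_sub_le (hα : 0 < α) (x : E2) (i j : Fin 2) :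
    |kraichnanQ α 0 i j - kraichnanQ α x i j| ≤ 4 * π ^ 2 * kraichnanMajorant α ‖x‖ := by
  rw [kraichnanQ, kraichnanQ, kraichnanMajorant, ← integral_sub
    (integrable_kraichnanQ_integrand hα 0 i j) (integrable_kraichnanQ_integrand hα x i j),
    ← integral_const_mul, ← norm_eq_abs]
  refine (norm_integral_le_integral_norm _).trans <| integral_mono_of_nonneg
    (Filter.Eventually.of_forall fun _ ↦ norm_nonneg _)
    ((integrable_kraichnanMajorant_integrand hα _).const_mul _)
    (Filter.Eventually.of_forall fun ξ ↦ ?_)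
  dsimp only
  set g := (1 + ‖ξ‖ ^ 2) ^ (-(1 + α))
  set m := (if i = j then (1:ℝ) else 0) - ξ i * ξ j / ‖ξ‖ ^ 2
  have hg : 0 ≤ g := by positivity
  rw [inner_zero_left, mul_zero, cos_zero, mul_one, ← mul_one_sub, norm_mul, norm_mul,
    norm_of_nonneg hg, norm_eq_abs, norm_eq_abs]
  calc g * |m| * |1 - cos (2 * π * inner ℝ x ξ)|
      ≤ g * 2 * (2 * π ^ 2 * min (‖x‖ ^ 2 * ‖ξ‖ ^ 2) 1) := by
        gcongr
        · exact abs_kronecker_sub_mul_div_norm_sq_le ξ i j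
        · exact abs_one_sub_cos_two_pi_inner_le x ξ
    _ = 4 * π ^ 2 * (g * min (‖x‖ ^ 2 * ‖ξ‖ ^ 2) 1) := by ring

lemma kraichnanMajorant_le_integral (hα : 0 < α) (t : ℝ) :
    kraichnanMajorant α t ≤ ∫ ξ : E2, (1 + ‖ξ‖ ^ 2) ^ (-(1 + α)) :=
  integral_mono (integrable_kraichnanMajorant_integrand hα t)
    (integrable_one_add_norm_sq_rpow_neg hα)
    fun _ ↦ mul_le_of_le_one_right (by positivity) (min_le_right _ _)

lemma kraichnanMajorant_eq_integral_Ioi (t : ℝ) :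
    kraichnanMajorant α t =
      2 * π * ∫ y in Ioi 0, y * ((1 + y ^ 2) ^ (-(1 + α)) * min (t ^ 2 * y ^ 2) 1) := by
  rw [kraichnanMajorant, integral_fun_norm_addHaar volume
    (fun y ↦ (1 + y ^ 2) ^ (-(1 + α)) * min (t ^ 2 * y ^ 2) 1)]
  simp only [finrank_euclideanSpace, Fintype.card_fin, Measure.real,
    EuclideanSpace.volume_ball_fin_two]
  norm_num [pi_pos.le]
  ring

lemma kraichnanMajorant_le_rpow (hα₀ : 0 < α) (hα₁ : α < 1) {t : ℝ} (ht : 0 ≤ t) :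
    kraichnanMajorant α t ≤ 2 * π * (1 / (2 - 2 * α) + 1 / (2 * α)) * t ^ (2 * α) := by
  rcases ht.eq_or_lt with rfl | ht
  · simp [kraichnanMajorant, zero_rpow (by positivity : 2 * α ≠ 0)]
  rw [kraichnanMajorant_eq_integral_Ioi, mul_assoc _ (_ + _)]
  gcongr
  exact integral_Ioi_mul_one_add_sq_rpow_neg_mul_min_le hα₀ hα₁ ht

lemma exists_kraichnanMajorant_le_mul_min (hα₀ : 0 < α) (hα₁ : α < 1) :
    ∃ C > 0, ∀ t, 0 ≤ t → kraichnanMajorant α t ≤ C * min (t ^ (2 * α)) 1 := by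
  set C₁ := 2 * π * (1 / (2 - 2 * α) + 1 / (2 * α))
  have hC₁ : 0 < C₁ := by
    have : 0 < 2 - 2 * α := by linarith
    positivity
  refine ⟨max (∫ ξ : E2, (1 + ‖ξ‖ ^ 2) ^ (-(1 + α))) C₁, lt_max_of_lt_right hC₁,
    fun t ht ↦ ?_⟩
  rcases min_choice (t ^ (2 * α)) 1 with h | h <;> rw [h]
  · exact (kraichnanMajorant_le_rpow hα₀ hα₁ ht).trans
      (mul_le_mul_of_nonneg_right (le_max_right _ _) (by positivity))
  · exact (kraichnanMajorant_le_integral hα₀ t).trans (by simp)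

end Kraichnan

/-- `|Q(0) - Q(x)| ≤ C (|x|^{2α} ∧ 1)` for all `x ∈ ℝ²` (entrywise matrix bound). -/
theorem kraichnan_Q_holder (α : ℝ) (hα : α ∈ Set.Ioo (0:ℝ) 1) :
    ∃ C > 0, ∀ x : EuclideanSpace ℝ (Fin 2), ∀ i j : Fin 2,
      |kraichnanQ α 0 i j - kraichnanQ α x i j| ≤ C * min (‖x‖ ^ (2 * α)) 1 := by
  obtain ⟨hα₀, hα₁⟩ := hα
  obtain ⟨C, hC, hM⟩ := exists_kraichnanMajorant_le_mul_min hα₀ hα₁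
  refine ⟨4 * π ^ 2 * C, by positivity, fun x i j ↦ ?_⟩
  calc |kraichnanQ α 0 i j - kraichnanQ α x i j|
      ≤ 4 * π ^ 2 * kraichnanMajorant α ‖x‖ := abs_kraichnanQ_zero_sub_le hα₀ x i j
    _ ≤ 4 * π ^ 2 * (C * min (‖x‖ ^ (2 * α)) 1) := by gcongr; exact hM _ (norm_nonneg x)
    _ = 4 * π ^ 2 * C * min (‖x‖ ^ (2 * α)) 1 := by ring
end
end

section
/- Let d ≥ 2 be an integer, β ∈ (1,2) with β < d, and δ ∈ (0,1). For x ∈ ℝ^d, x ≠ 0, set q(t,x) = min( t/|x|^{d+β}, t^{−d/β} ) for t > 0. Then: (i) if |x| ≤ δ^{1/β} or |x| ≥ δ^{−1/β}, one has ∫_0^δ q(t,x) dt + ∫_{1/δ}^∞ q(t,x) dt ≤ (1/2 + β/(d−β)) |x|^{β−d}; (ii) if δ^{1/β} ≤ |x| ≤ δ^{−1/β}, one has ∫_0^δ q(t,x) dt + ∫_{1/δ}^∞ q(t,x) dt ≤ (1/2) δ² |x|^{−(β+d)} + (β/(d−β)) δ^{(d−β)/β}. -/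
open MeasureTheory Real

noncomputable section

/-- Comparison profile `q(t,x) = min( t/|x|^{d+β}, t^{-d/β} )` for the fractional heat
kernel, as a function of `t` and of `r = |x|`. -/
def qprof (d : ℕ) (β r t : ℝ) : ℝ :=
  min (t / r ^ ((d : ℝ) + β)) (t ^ (-(d : ℝ) / β))

/-! Both bounds come from the two majorants of the minimum: `q ≤ t / r^{d+β}` on `(0, a]`,
whose integral is `a² / (2 r^{d+β})`, and `q ≤ t^{-d/β}` on `(a, ∞)`, integrable because
`d/β > 1` with integral `β/(d-β) · a^{(β-d)/β}`. In the middle regime this is applied with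
`a = δ` and `a = 1/δ`; otherwise the two pieces are bounded by the integral over all of
`(0, ∞)`, computed by splitting at the crossover time `a = r^β`. -/

theorem setIntegral_Ioc_add_Ioi_le_Ioi {f : ℝ → ℝ} {a b : ℝ} (ha : 0 < a) (hab : a ≤ b)
    (hf : IntegrableOn f (Set.Ioi 0)) (hf_nonneg : ∀ t ∈ Set.Ioi (0 : ℝ), 0 ≤ f t) :
    (∫ t in Set.Ioc 0 a, f t) + (∫ t in Set.Ioi b, f t) ≤ ∫ t in Set.Ioi 0, f t := by
  have hsub : Set.Ioc 0 a ∪ Set.Ioi b ⊆ Set.Ioi 0 :=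
    Set.union_subset Set.Ioc_subset_Ioi_self (Set.Ioi_subset_Ioi (ha.le.trans hab))
  rw [← setIntegral_union (Set.Ioc_disjoint_Ioi hab) measurableSet_Ioi
    (hf.mono_set (subset_trans Set.subset_union_left hsub))
    (hf.mono_set (subset_trans Set.subset_union_right hsub))]
  exact setIntegral_mono_set hf
    (ae_restrict_of_forall_mem measurableSet_Ioi hf_nonneg) hsub.eventuallyLE

theorem setIntegral_Ioc_zero_div_const (a c : ℝ) (ha : 0 ≤ a) :
    ∫ t in Set.Ioc 0 a, t / c = a ^ 2 / (2 * c) := by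
  rw [integral_div, ← intervalIntegral.integral_of_le ha, integral_id]
  ring

section Profile

variable {d : ℕ} {β r : ℝ}

theorem qprof_nonneg (hr : 0 ≤ r) {t : ℝ} (ht : 0 ≤ t) : 0 ≤ qprof d β r t :=
  le_min (div_nonneg ht (rpow_nonneg hr _)) (rpow_nonneg ht _)

theorem measurable_qprof : Measurable (qprof d β r) := by
  unfold qprof
  fun_prop

theorem neg_natCast_div_lt_neg_one (hβ : 0 < β) (hβd : β < d) : -(d : ℝ) / β < -1 := by
  rw [div_lt_iff₀ hβ]
  linarith

theorem setIntegral_Ioi_rpow_neg_div (hβ : 0 < β) (hβd : β < d) {a : ℝ} (ha : 0 < a) :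
    ∫ t in Set.Ioi a, t ^ (-(d : ℝ) / β) = β / (d - β) * a ^ ((β - d) / β) := by
  have hexp : -(d : ℝ) / β + 1 = (β - d) / β := by field_simp; ring
  have hexp_neg : (β - d) / β = -(((d : ℝ) - β) / β) := by ring
  rw [integral_Ioi_rpow_of_lt (neg_natCast_div_lt_neg_one hβ hβd) ha, hexp, hexp_neg,
    neg_div_neg_eq, div_div_eq_mul_div, ← hexp_neg]
  ring

theorem integrableOn_qprof_Ioc (hr : 0 ≤ r) (a : ℝ) :
    IntegrableOn (qprof d β r) (Set.Ioc 0 a) := by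
  refine (continuous_id.div_const (r ^ ((d : ℝ) + β))).integrableOn_Ioc.mono'
    measurable_qprof.aestronglyMeasurable ?_
  filter_upwards [ae_restrict_mem measurableSet_Ioc] with t ht
  rw [norm_of_nonneg (qprof_nonneg hr ht.1.le)]
  exact min_le_left _ _

theorem integrableOn_qprof_Ioi (hr : 0 ≤ r) (hβ : 0 < β) (hβd : β < d) {a : ℝ} (ha : 0 < a) :
    IntegrableOn (qprof d β r) (Set.Ioi a) := by
  refine (integrableOn_Ioi_rpow_of_lt (neg_natCast_div_lt_neg_one hβ hβd) ha).mono'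
    measurable_qprof.aestronglyMeasurable ?_
  filter_upwards [ae_restrict_mem measurableSet_Ioi] with t ht
  rw [norm_of_nonneg (qprof_nonneg hr (ha.trans ht).le)]
  exact min_le_right _ _

theorem setIntegral_qprof_Ioc_le (hr : 0 ≤ r) {a : ℝ} (ha : 0 ≤ a) :
    ∫ t in Set.Ioc 0 a, qprof d β r t ≤ a ^ 2 / (2 * r ^ ((d : ℝ) + β)) := by
  rw [← setIntegral_Ioc_zero_div_const a _ ha]
  exact setIntegral_mono_on (integrableOn_qprof_Ioc hr a)
    (continuous_id.div_const _).integrableOn_Ioc measurableSet_Ioc fun t _ => min_le_left _ _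

theorem setIntegral_qprof_Ioi_le (hr : 0 ≤ r) (hβ : 0 < β) (hβd : β < d) {a : ℝ}
    (ha : 0 < a) :
    ∫ t in Set.Ioi a, qprof d β r t ≤ β / (d - β) * a ^ ((β - d) / β) := by
  rw [← setIntegral_Ioi_rpow_neg_div hβ hβd ha]
  exact setIntegral_mono_on (integrableOn_qprof_Ioi hr hβ hβd ha)
    (integrableOn_Ioi_rpow_of_lt (neg_natCast_div_lt_neg_one hβ hβd) ha) measurableSet_Ioi
    fun t _ => min_le_right _ _

theorem integrableOn_qprof_Ioi_zero (hr : 0 < r) (hβ : 0 < β) (hβd : β < d) :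
    IntegrableOn (qprof d β r) (Set.Ioi 0) := by
  rw [← Set.Ioc_union_Ioi_eq_Ioi (zero_le_one' ℝ)]
  exact (integrableOn_qprof_Ioc hr.le 1).union (integrableOn_qprof_Ioi hr.le hβ hβd one_pos)

theorem setIntegral_qprof_Ioi_zero_le (hr : 0 < r) (hβ : 0 < β) (hβd : β < d) :
    ∫ t in Set.Ioi 0, qprof d β r t ≤ (1 / 2 + β / (d - β)) * r ^ (β - d) := by
  have hrβ : 0 < r ^ β := rpow_pos_of_pos hr β
  have head : (r ^ β) ^ 2 / (2 * r ^ ((d : ℝ) + β)) = 1 / 2 * r ^ (β - d) := by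
    rw [rpow_sub hr, rpow_add hr]
    field_simp
  have tail : (r ^ β) ^ ((β - d) / β) = r ^ (β - d) := by
    rw [← rpow_mul hr.le, mul_div_cancel₀ _ hβ.ne']
  rw [← Set.Ioc_union_Ioi_eq_Ioi hrβ.le, setIntegral_union (Set.Ioc_disjoint_Ioi le_rfl)
    measurableSet_Ioi (integrableOn_qprof_Ioc hr.le _) (integrableOn_qprof_Ioi hr.le hβ hβd hrβ)]
  calc (∫ t in Set.Ioc 0 (r ^ β), qprof d β r t) + ∫ t in Set.Ioi (r ^ β), qprof d β r t
      ≤ (r ^ β) ^ 2 / (2 * r ^ ((d : ℝ) + β)) + β / (d - β) * (r ^ β) ^ ((β - d) / β) :=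
        add_le_add (setIntegral_qprof_Ioc_le hr.le hrβ.le)
          (setIntegral_qprof_Ioi_le hr.le hβ hβd hrβ)
    _ = (1 / 2 + β / (d - β)) * r ^ (β - d) := by rw [head, tail]; ring

end Profile

theorem qprof_tail_integral_bounds_general (d : ℕ) (β δ : ℝ)
    (hβ1 : 1 < β) (hβd : β < d) (hδ : δ ∈ Set.Ioo (0:ℝ) 1)
    (x : EuclideanSpace ℝ (Fin d)) (hx : x ≠ 0) :
    ((‖x‖ ≤ δ ^ ((1:ℝ)/β) ∨ δ ^ (-(1/β)) ≤ ‖x‖) →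
      (∫ t in Set.Ioc (0:ℝ) δ, qprof d β ‖x‖ t) + (∫ t in Set.Ioi (1/δ), qprof d β ‖x‖ t)
        ≤ (1/2 + β / ((d : ℝ) - β)) * ‖x‖ ^ (β - (d : ℝ))) ∧
    ((δ ^ ((1:ℝ)/β) ≤ ‖x‖ ∧ ‖x‖ ≤ δ ^ (-(1/β))) →
      (∫ t in Set.Ioc (0:ℝ) δ, qprof d β ‖x‖ t) + (∫ t in Set.Ioi (1/δ), qprof d β ‖x‖ t)
        ≤ (1/2) * δ ^ 2 * ‖x‖ ^ (-(β + (d : ℝ)))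
          + (β / ((d : ℝ) - β)) * δ ^ (((d : ℝ) - β) / β)) := by
  obtain ⟨hδ0, hδ1⟩ := hδ
  have hr : 0 < ‖x‖ := norm_pos_iff.mpr hx
  have hβ : 0 < β := one_pos.trans hβ1
  have hδ_le_inv : δ ≤ 1 / δ := hδ1.le.trans (one_le_one_div hδ0 hδ1.le)
  refine ⟨fun _ => ?_, fun _ => ?_⟩
  · exact (setIntegral_Ioc_add_Ioi_le_Ioi hδ0 hδ_le_inv
      (integrableOn_qprof_Ioi_zero hr hβ hβd) fun t ht => qprof_nonneg hr.le ht.le).trans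
      (setIntegral_qprof_Ioi_zero_le hr hβ hβd)
  · have head :
        δ ^ 2 / (2 * ‖x‖ ^ ((d : ℝ) + β)) = 1 / 2 * δ ^ 2 * ‖x‖ ^ (-(β + (d : ℝ))) := by
      rw [rpow_neg hr.le, add_comm β]
      field_simp
    have tail : (1 / δ) ^ ((β - d) / β) = δ ^ (((d : ℝ) - β) / β) := by
      rw [one_div, inv_rpow hδ0.le, ← rpow_neg hδ0.le, ← neg_div, neg_sub]
    calc _ ≤ δ ^ 2 / (2 * ‖x‖ ^ ((d : ℝ) + β)) + β / (d - β) * (1 / δ) ^ ((β - d) / β) :=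
          add_le_add (setIntegral_qprof_Ioc_le hr.le hδ0.le)
            (setIntegral_qprof_Ioi_le hr.le hβ hβd (one_div_pos.mpr hδ0))
      _ = _ := by rw [head, tail]

/-- bounds for `∫_0^δ q(t,x) dt + ∫_{1/δ}^∞ q(t,x) dt` in the two regimes
`|x| ≤ δ^{1/β}` or `|x| ≥ δ^{-1/β}`, and `δ^{1/β} ≤ |x| ≤ δ^{-1/β}`. -/
theorem qprof_tail_integral_bounds (d : ℕ) (hd : 2 ≤ d) (β δ : ℝ)
    (hβ1 : 1 < β) (hβ2 : β < 2) (hβd : β < d) (hδ : δ ∈ Set.Ioo (0:ℝ) 1)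
    (x : EuclideanSpace ℝ (Fin d)) (hx : x ≠ 0) :
    ((‖x‖ ≤ δ ^ ((1:ℝ)/β) ∨ δ ^ (-(1/β)) ≤ ‖x‖) →
      (∫ t in Set.Ioc (0:ℝ) δ, qprof d β ‖x‖ t) + (∫ t in Set.Ioi (1/δ), qprof d β ‖x‖ t)
        ≤ (1/2 + β / ((d : ℝ) - β)) * ‖x‖ ^ (β - (d : ℝ))) ∧
    ((δ ^ ((1:ℝ)/β) ≤ ‖x‖ ∧ ‖x‖ ≤ δ ^ (-(1/β))) →
      (∫ t in Set.Ioc (0:ℝ) δ, qprof d β ‖x‖ t) + (∫ t in Set.Ioi (1/δ), qprof d β ‖x‖ t)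
        ≤ (1/2) * δ ^ 2 * ‖x‖ ^ (-(β + (d : ℝ)))
          + (β / ((d : ℝ) - β)) * δ ^ (((d : ℝ) - β) / β)) :=
  qprof_tail_integral_bounds_general d β δ hβ1 hβd hδ x hx
end
end

section
/- Let α ∈ (0,1) and let 0 < ε < 2α. There exists a constant C > 0 (depending on α only) such that for every δ ∈ (0,1) and every x ∈ ℝ²: | (Q^δ(0) − Q^δ(x)) − (Q(0) − Q(x)) | ≤ (C/ε) δ^ε |x|^{2α−ε}, where |·| denotes a matrix norm. -/
open MeasureTheory Real Set Metric

noncomputable section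

/-- Mollified Kraichnan covariance `Q^δ(x)` built from a cutoff `χ = ρ̂^δ`, entrywise. -/
def kraichnanQmollified (α : ℝ) (χ : EuclideanSpace ℝ (Fin 2) → ℝ)
    (x : EuclideanSpace ℝ (Fin 2)) (i j : Fin 2) : ℝ :=
  ∫ ξ : EuclideanSpace ℝ (Fin 2),
    (1 + ‖ξ‖ ^ 2) ^ (-(1 + α)) * ((if i = j then (1:ℝ) else 0) - ξ i * ξ j / ‖ξ‖ ^ 2)
      * (χ ξ) ^ 2 * Real.cos (2 * π * (inner ℝ x ξ : ℝ))

namespace KraichnanAux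

abbrev E2 := EuclideanSpace ℝ (Fin 2)

lemma coord_le_norm (ξ : E2) (i : Fin 2) : |ξ i| ≤ ‖ξ‖ := by
  rw [EuclideanSpace.norm_eq]
  have h : |ξ i| = Real.sqrt (ξ i ^ 2) := by rw [Real.sqrt_sq_eq_abs]
  rw [h]
  apply Real.sqrt_le_sqrt
  have := Finset.single_le_sum (f := fun k => ‖ξ k‖ ^ 2) (fun k _ => by positivity)
    (Finset.mem_univ i)
  simpa using this

lemma m_abs_le (i j : Fin 2) (ξ : E2) :
    |((if i = j then (1:ℝ) else 0) - ξ i * ξ j / ‖ξ‖ ^ 2)| ≤ 2 := by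
  have h1 : |ξ i * ξ j / ‖ξ‖ ^ 2| ≤ 1 := by
    rcases eq_or_ne ξ 0 with rfl | hξ
    · simp
    · have hn0 : (0:ℝ) < ‖ξ‖ := norm_pos_iff.mpr hξ
      have hn : (0:ℝ) < ‖ξ‖ ^ 2 := by positivity
      rw [abs_div, abs_mul, abs_of_pos hn, div_le_one hn]
      calc |ξ i| * |ξ j| ≤ ‖ξ‖ * ‖ξ‖ :=
            mul_le_mul (coord_le_norm ξ i) (coord_le_norm ξ j) (abs_nonneg _) (norm_nonneg _)
        _ = ‖ξ‖ ^ 2 := (sq ‖ξ‖).symm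
  have h2 : |if i = j then (1:ℝ) else 0| ≤ 1 := by split <;> simp
  calc |((if i = j then (1:ℝ) else 0) - ξ i * ξ j / ‖ξ‖ ^ 2)|
      ≤ |if i = j then (1:ℝ) else 0| + |ξ i * ξ j / ‖ξ‖ ^ 2| := abs_sub _ _
    _ ≤ 2 := by linarith

lemma one_sub_cos_eq (t : ℝ) : 1 - Real.cos t = 2 * Real.sin (t/2) ^ 2 := by
  have h := Real.cos_two_mul (t/2)
  have h2 : 2 * (t/2) = t := by ring
  rw [h2] at h
  have hs := Real.sin_sq_add_cos_sq (t/2)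
  nlinarith

lemma one_sub_cos_le_rpow {θ : ℝ} (hθ0 : 0 < θ) (hθ2 : θ ≤ 2) (t : ℝ) :
    1 - Real.cos t ≤ 2 * |t| ^ θ := by
  rcases le_or_gt |t| 1 with h | h
  · have h1 : 1 - Real.cos t ≤ t ^ 2 / 2 := by
      rw [one_sub_cos_eq]
      have := Real.sin_sq_le_sq (x := t/2)
      nlinarith
    have h2 : t ^ 2 ≤ |t| ^ θ := by
      rcases eq_or_ne t 0 with rfl | ht
      · simp [Real.zero_rpow hθ0.ne']
      · have habs : 0 < |t| := abs_pos.mpr ht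
        have hle : |t| ^ (2:ℝ) ≤ |t| ^ θ :=
          Real.rpow_le_rpow_of_exponent_ge habs h hθ2
        calc t ^ 2 = |t| ^ (2:ℝ) := by
              rw [show ((2:ℝ)) = ((2:ℕ):ℝ) by norm_num, Real.rpow_natCast, sq_abs]
          _ ≤ |t| ^ θ := hle
    nlinarith
  · have h1 : (1:ℝ) ≤ |t| ^ θ := Real.one_le_rpow h.le hθ0.le
    have := Real.neg_one_le_cos t
    nlinarith

lemma w_cont (α : ℝ) : Continuous (fun ξ : E2 => (1 + ‖ξ‖ ^ 2) ^ (-(1+α))) := by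
  apply Continuous.rpow_const (by fun_prop)
  intro ξ; left; positivity

lemma w_le (α : ℝ) (hα : 0 < α) (ξ : E2) :
    (1 + ‖ξ‖ ^ 2) ^ (-(1+α)) ≤ 2 ^ (1+α) * (1 + ‖ξ‖) ^ (-(2+2*α)) := by
  set a : ℝ := 1 + ‖ξ‖ ^ 2 with ha
  set b : ℝ := 1 + ‖ξ‖ with hb
  have ha0 : (0:ℝ) < a := by positivity
  have hb0 : (0:ℝ) < b := by positivity
  have key : b ^ ((2:ℝ)+2*α) ≤ 2 ^ (1+α) * a ^ ((1:ℝ)+α) := by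
    have h1 : b ^ ((2:ℝ)+2*α) = (b ^ (2:ℕ)) ^ ((1:ℝ)+α) := by
      rw [show (2:ℝ)+2*α = (2:ℕ)*(1+α) by push_cast; ring, Real.rpow_natCast_mul hb0.le]
    have h2 : b ^ (2:ℕ) ≤ 2 * a := by
      simp only [ha, hb]
      nlinarith [norm_nonneg ξ, sq_nonneg (‖ξ‖ - 1)]
    calc b ^ ((2:ℝ)+2*α) = (b ^ (2:ℕ)) ^ ((1:ℝ)+α) := h1
      _ ≤ (2*a) ^ ((1:ℝ)+α) := Real.rpow_le_rpow (by positivity) h2 (by linarith)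
      _ = 2 ^ (1+α) * a ^ ((1:ℝ)+α) := Real.mul_rpow (by norm_num) ha0.le
  have h3 : a ^ (-(1+α)) = (a ^ ((1:ℝ)+α))⁻¹ := by rw [Real.rpow_neg ha0.le]
  have h4 : b ^ (-(2+2*α)) = (b ^ ((2:ℝ)+2*α))⁻¹ := by rw [Real.rpow_neg hb0.le]
  rw [h3, h4]
  have hc : (0:ℝ) < 2 ^ (1+α) := by positivity
  have hY : (0:ℝ) < b ^ ((2:ℝ)+2*α) := Real.rpow_pos_of_pos hb0 _
  have hdiv : b ^ ((2:ℝ)+2*α) / 2 ^ (1+α) ≤ a ^ ((1:ℝ)+α) := by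
    rw [div_le_iff₀ hc]; linarith [key]
  have hinv := inv_anti₀ (by positivity) hdiv
  calc (a ^ ((1:ℝ)+α))⁻¹ ≤ (b ^ ((2:ℝ)+2*α) / 2 ^ (1+α))⁻¹ := hinv
    _ = 2 ^ (1+α) * (b ^ ((2:ℝ)+2*α))⁻¹ := by rw [inv_div, div_eq_mul_inv]

lemma integrable_w (α : ℝ) (hα : 0 < α) :
    Integrable (fun ξ : E2 => (1 + ‖ξ‖ ^ 2) ^ (-(1+α))) := by
  have hdim : (Module.finrank ℝ E2 : ℝ) < 2 + 2*α := by
    simp [finrank_euclideanSpace_fin]; linarith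
  have hI : Integrable (fun ξ : E2 => (2:ℝ) ^ (1+α) * (1 + ‖ξ‖) ^ (-(2+2*α))) :=
    (integrable_one_add_norm hdim).const_mul _
  apply hI.mono' ((w_cont α).aestronglyMeasurable)
  refine Filter.Eventually.of_forall fun ξ => ?_
  rw [Real.norm_eq_abs, abs_of_nonneg (Real.rpow_nonneg (by positivity) _)]
  exact w_le α hα ξ

lemma meas_coord (k : Fin 2) : Measurable (fun ξ : E2 => ξ k) :=
  (EuclideanSpace.proj (𝕜 := ℝ) k).continuous.measurable

/-- measurability of a generic integrand -/
lemma meas_integrand (α : ℝ) (i j : Fin 2) {g : E2 → ℝ} (hg : Measurable g) :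
    AEStronglyMeasurable (fun ξ : E2 =>
      (1 + ‖ξ‖ ^ 2) ^ (-(1 + α)) * ((if i = j then (1:ℝ) else 0) - ξ i * ξ j / ‖ξ‖ ^ 2)
        * g ξ) volume := by
  have hm : Measurable (fun ξ : E2 => (if i = j then (1:ℝ) else 0) - ξ i * ξ j / ‖ξ‖ ^ 2) := by
    apply Measurable.sub measurable_const
    exact ((meas_coord i).mul (meas_coord j)).div ((continuous_norm.measurable).pow_const 2)
  exact (((w_cont α).measurable.mul hm).mul hg).aestronglyMeasurable

/-- integrability of a generic integrand with bounded third factor -/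
lemma integrable_integrand (α : ℝ) (hα : 0 < α) (i j : Fin 2) {g : E2 → ℝ}
    (hg : Measurable g) (hgb : ∀ ξ, |g ξ| ≤ 1) :
    Integrable (fun ξ : E2 =>
      (1 + ‖ξ‖ ^ 2) ^ (-(1 + α)) * ((if i = j then (1:ℝ) else 0) - ξ i * ξ j / ‖ξ‖ ^ 2)
        * g ξ) := by
  apply ((integrable_w α hα).const_mul 2).mono' (meas_integrand α i j hg)
  refine Filter.Eventually.of_forall fun ξ => ?_
  have hw0 : 0 ≤ (1 + ‖ξ‖ ^ 2) ^ (-(1+α)) := Real.rpow_nonneg (by positivity) _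
  rw [Real.norm_eq_abs, abs_mul, abs_mul, abs_of_nonneg hw0]
  calc (1 + ‖ξ‖ ^ 2) ^ (-(1+α)) * |((if i = j then (1:ℝ) else 0) - ξ i * ξ j / ‖ξ‖ ^ 2)| * |g ξ|
      ≤ (1 + ‖ξ‖ ^ 2) ^ (-(1+α)) * 2 * 1 := by
        apply mul_le_mul (by
          apply mul_le_mul_of_nonneg_left (m_abs_le i j ξ) hw0) (hgb ξ) (abs_nonneg _)
        positivity
    _ = 2 * (1 + ‖ξ‖ ^ 2) ^ (-(1+α)) := by ring

lemma radial_integral (ε R : ℝ) (hε : 0 < ε) (hR : 0 < R) :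
    ∫ ξ : E2, Set.indicator {ξ : E2 | R ≤ ‖ξ‖} (fun ξ => ‖ξ‖ ^ (-(2+ε))) ξ
      = 2 * (volume (ball (0:E2) 1)).toReal * (R ^ (-ε) / ε) := by
  have hdim : Module.finrank ℝ E2 = 2 := finrank_euclideanSpace_fin
  have h := integral_fun_norm_addHaar (μ := (volume : Measure E2))
    (fun r : ℝ => Set.indicator (Ici R) (fun r => r ^ (-(2+ε))) r)
  have hLHS : (fun ξ : E2 => Set.indicator {ξ : E2 | R ≤ ‖ξ‖} (fun ξ => ‖ξ‖ ^ (-(2+ε))) ξ)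
      = fun ξ : E2 => Set.indicator (Ici R) (fun r => r ^ (-(2+ε))) ‖ξ‖ := by
    funext ξ
    by_cases hc : R ≤ ‖ξ‖ <;> simp [Set.indicator, hc]
  rw [hLHS, h, hdim]
  have h1 : ∫ y in Ioi (0:ℝ), y ^ (2 - 1) • Set.indicator (Ici R) (fun r => r ^ (-(2+ε))) y
      = ∫ y in Ioi (0:ℝ), Set.indicator (Ici R) (fun r => r ^ (-(1+ε))) y := by
    apply setIntegral_congr_fun measurableSet_Ioi
    intro y hy
    simp only [pow_one, smul_eq_mul]
    have hy0 : (0:ℝ) < y := hy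
    by_cases hc : R ≤ y
    · simp only [Set.indicator_of_mem (mem_Ici.mpr hc)]
      rw [show (2-1 : ℕ) = 1 by norm_num, pow_one,
        show y * y ^ (-(2+ε)) = y ^ (1:ℝ) * y ^ (-(2+ε)) by rw [Real.rpow_one],
        ← Real.rpow_add hy0]
      congr 1; ring
    · simp [Set.indicator_of_notMem (fun h => hc (mem_Ici.mp h))]
  have h2 : ∫ y in Ioi (0:ℝ), Set.indicator (Ici R) (fun r => r ^ (-(1+ε))) y
      = ∫ y in Ioi R, y ^ (-(1+ε)) := by
    rw [setIntegral_indicator measurableSet_Ici]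
    have hss : Ioi (0:ℝ) ∩ Ici R = Ici R :=
      inter_eq_self_of_subset_right (fun y hy => lt_of_lt_of_le hR hy)
    rw [hss, ← integral_Ici_eq_integral_Ioi]
  have h3 : ∫ y in Ioi R, y ^ (-(1+ε)) = R ^ (-ε) / ε := by
    rw [integral_Ioi_rpow_of_lt (by linarith) hR]
    rw [show -(1+ε) + 1 = -ε by ring]
    field_simp
  rw [h1, h2, h3]
  simp only [smul_eq_mul, nsmul_eq_mul]
  push_cast
  simp only [measureReal_def]
  ring_nf

lemma integrable_B (ε δ : ℝ) (hε : 0 < ε) (hδ0 : 0 < δ) (hδ1 : δ < 1) :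
    Integrable (fun ξ : E2 =>
      Set.indicator {ξ : E2 | 1/δ ≤ ‖ξ‖} (fun ξ => ‖ξ‖ ^ (-(2+ε))) ξ) := by
  have hdim : (Module.finrank ℝ E2 : ℝ) < 2 + ε := by
    simp [finrank_euclideanSpace_fin]; linarith
  have hI : Integrable (fun ξ : E2 => (2:ℝ) ^ ((2:ℝ)+ε) * (1 + ‖ξ‖) ^ (-(2+ε))) :=
    (integrable_one_add_norm hdim).const_mul _
  have hset : MeasurableSet {ξ : E2 | 1/δ ≤ ‖ξ‖} :=
    measurableSet_le measurable_const continuous_norm.measurable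
  have heq : (fun ξ : E2 => Set.indicator {ξ : E2 | 1/δ ≤ ‖ξ‖} (fun ξ => ‖ξ‖ ^ (-(2+ε))) ξ)
      = fun ξ : E2 => Set.indicator {ξ : E2 | 1/δ ≤ ‖ξ‖}
          (fun ξ => (max ‖ξ‖ (1/δ)) ^ (-(2+ε))) ξ := by
    funext ξ
    by_cases hc : 1/δ ≤ ‖ξ‖
    · rw [Set.indicator_of_mem (by exact hc), Set.indicator_of_mem (by exact hc),
        max_eq_left hc]
    · rw [Set.indicator_of_notMem (by exact hc), Set.indicator_of_notMem (by exact hc)]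
  have hmeas : AEStronglyMeasurable (fun ξ : E2 =>
      Set.indicator {ξ : E2 | 1/δ ≤ ‖ξ‖} (fun ξ => ‖ξ‖ ^ (-(2+ε))) ξ) volume := by
    rw [heq]
    have hcont : Continuous (fun ξ : E2 => (max ‖ξ‖ (1/δ)) ^ (-(2+ε))) := by
      apply Continuous.rpow_const (continuous_norm.max continuous_const)
      intro ξ
      left
      have : (0:ℝ) < 1/δ := by positivity
      have := le_max_right ‖ξ‖ (1/δ)
      intro h0
      rw [h0] at this
      linarith
    exact (hcont.measurable.indicator hset).aestronglyMeasurable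
  apply hI.mono' hmeas
  refine Filter.Eventually.of_forall fun ξ => ?_
  rw [Real.norm_eq_abs]
  by_cases hc : 1/δ ≤ ‖ξ‖
  · rw [Set.indicator_of_mem (by exact hc)]
    have h1δ : (1:ℝ) < 1/δ := by rw [lt_div_iff₀ hδ0]; linarith
    have hξ1 : (1:ℝ) < ‖ξ‖ := lt_of_lt_of_le h1δ hc
    have hξ0 : (0:ℝ) < ‖ξ‖ := by linarith
    rw [abs_of_nonneg (Real.rpow_nonneg hξ0.le _)]
    -- ‖ξ‖ ^ (-(2+ε)) ≤ 2^(2+ε) * (1+‖ξ‖)^(-(2+ε))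
    have hb : 1 + ‖ξ‖ ≤ 2 * ‖ξ‖ := by linarith
    have h5 : (2 * ‖ξ‖) ^ (-((2:ℝ)+ε)) ≤ (1 + ‖ξ‖) ^ (-((2:ℝ)+ε)) :=
      Real.rpow_le_rpow_of_nonpos (by positivity) hb (by linarith)
    have h6 : (2 * ‖ξ‖) ^ (-((2:ℝ)+ε)) = 2 ^ (-((2:ℝ)+ε)) * ‖ξ‖ ^ (-((2:ℝ)+ε)) :=
      Real.mul_rpow (by norm_num) hξ0.le
    have h7 : ‖ξ‖ ^ (-((2:ℝ)+ε)) = 2 ^ ((2:ℝ)+ε) * (2 * ‖ξ‖) ^ (-((2:ℝ)+ε)) := by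
      rw [h6, ← mul_assoc, ← Real.rpow_add (by norm_num : (0:ℝ) < 2),
        show ((2:ℝ)+ε + -(2+ε)) = 0 by ring, Real.rpow_zero, one_mul]
    rw [h7]
    apply mul_le_mul_of_nonneg_left h5 (by positivity)
  · rw [Set.indicator_of_notMem (by exact hc)]
    simp only [abs_zero]
    positivity


lemma cos_meas (y : E2) : Measurable fun ξ : E2 => Real.cos (2 * π * (inner ℝ y ξ : ℝ)) := by
  apply (Real.continuous_cos.comp (continuous_const.mul
    (continuous_const.inner continuous_id))).measurable

lemma pointwise_bound (α ε δ : ℝ) (hα0 : 0 < α) (hα1 : α < 1) (hε : 0 < ε) (hε2 : ε < 2*α)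
    (hδ0 : 0 < δ) (χ : E2 → ℝ) (hχIcc : ∀ ξ, χ ξ ∈ Set.Icc (0:ℝ) 1)
    (hχ1 : ∀ ξ : E2, ‖ξ‖ ≤ 1/δ → χ ξ = 1) (x : E2) (i j : Fin 2) (ξ : E2) :
    |(1 + ‖ξ‖ ^ 2) ^ (-(1 + α)) * ((if i = j then (1:ℝ) else 0) - ξ i * ξ j / ‖ξ‖ ^ 2)
        * (((χ ξ)^2 - 1) * (1 - Real.cos (2 * π * (inner ℝ x ξ : ℝ))))|
      ≤ 16 * π^2 * ‖x‖ ^ (2*α - ε) *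
        Set.indicator {ξ : E2 | 1/δ ≤ ‖ξ‖} (fun ξ => ‖ξ‖ ^ (-(2+ε))) ξ := by
  set θ : ℝ := 2*α - ε with hθdef
  have hθ0 : 0 < θ := by simp only [hθdef]; linarith
  have hθ2 : θ ≤ 2 := by simp only [hθdef]; linarith
  by_cases hc : 1/δ ≤ ‖ξ‖
  · rw [Set.indicator_of_mem (by exact hc)]
    have hξ0 : (0:ℝ) < ‖ξ‖ := lt_of_lt_of_le (by positivity) hc
    set t : ℝ := 2 * π * (inner ℝ x ξ : ℝ) with htdef
    have h_t : |t| ≤ 2 * π * ‖x‖ * ‖ξ‖ := by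
      rw [htdef, abs_mul, abs_of_pos (by positivity : (0:ℝ) < 2 * π)]
      nlinarith [abs_real_inner_le_norm x ξ, Real.pi_gt_three, abs_nonneg (inner ℝ x ξ : ℝ)]
    have hw0 : (0:ℝ) ≤ (1 + ‖ξ‖ ^ 2) ^ (-(1+α)) := Real.rpow_nonneg (by positivity) _
    have hwle : (1 + ‖ξ‖ ^ 2) ^ (-(1+α)) ≤ ‖ξ‖ ^ (-(2+2*α)) := by
      have h1 : ((‖ξ‖ ^ (2:ℕ) : ℝ)) ^ (-(1+α)) = ‖ξ‖ ^ (-(2+2*α)) := by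
        rw [← Real.rpow_natCast_mul (norm_nonneg ξ)]
        congr 1; push_cast; ring
      calc (1 + ‖ξ‖ ^ 2) ^ (-(1+α)) ≤ (‖ξ‖ ^ (2:ℕ)) ^ (-(1+α)) :=
            Real.rpow_le_rpow_of_nonpos (by positivity) (by nlinarith) (by linarith)
        _ = ‖ξ‖ ^ (-(2+2*α)) := h1
    have hχb : |(χ ξ)^2 - 1| ≤ 1 := by
      obtain ⟨h0, h1'⟩ := hχIcc ξ
      rw [abs_le]
      constructor <;> nlinarith
    have hcosb : |1 - Real.cos t| ≤ 2 * (2 * π * ‖x‖ * ‖ξ‖) ^ θ := by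
      rw [abs_of_nonneg (by linarith [Real.cos_le_one t])]
      calc 1 - Real.cos t ≤ 2 * |t| ^ θ := one_sub_cos_le_rpow hθ0 hθ2 t
        _ ≤ 2 * (2 * π * ‖x‖ * ‖ξ‖) ^ θ := by
            apply mul_le_mul_of_nonneg_left
              (Real.rpow_le_rpow (abs_nonneg t) h_t hθ0.le) (by norm_num)
    have hgb : |((χ ξ)^2 - 1) * (1 - Real.cos t)| ≤ 2 * (2 * π * ‖x‖ * ‖ξ‖) ^ θ := by
      rw [abs_mul]
      calc |(χ ξ)^2 - 1| * |1 - Real.cos t| ≤ 1 * (2 * (2 * π * ‖x‖ * ‖ξ‖) ^ θ) :=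
            mul_le_mul hχb hcosb (abs_nonneg _) (by norm_num)
        _ = 2 * (2 * π * ‖x‖ * ‖ξ‖) ^ θ := by ring
    have hsplit : (2 * π * ‖x‖ * ‖ξ‖) ^ θ = (2*π) ^ θ * ‖x‖ ^ θ * ‖ξ‖ ^ θ := by
      rw [show 2 * π * ‖x‖ * ‖ξ‖ = (2*π) * (‖x‖ * ‖ξ‖) by ring,
        Real.mul_rpow (by positivity) (by positivity),
        Real.mul_rpow (norm_nonneg x) (norm_nonneg ξ), mul_assoc]
    have h2π : (2*π) ^ θ ≤ 4 * π^2 := by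
      have h1 : (1:ℝ) ≤ 2*π := by nlinarith [Real.pi_gt_three]
      calc (2*π) ^ θ ≤ (2*π) ^ (2:ℝ) := Real.rpow_le_rpow_of_exponent_le h1 hθ2
        _ = 4 * π^2 := by
            rw [show ((2:ℝ)) = ((2:ℕ):ℝ) by norm_num, Real.rpow_natCast]; ring
    -- assemble
    rw [abs_mul, abs_mul, abs_of_nonneg hw0]
    calc (1 + ‖ξ‖ ^ 2) ^ (-(1+α))
          * |((if i = j then (1:ℝ) else 0) - ξ i * ξ j / ‖ξ‖ ^ 2)|
          * |((χ ξ)^2 - 1) * (1 - Real.cos t)|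
        ≤ ‖ξ‖ ^ (-(2+2*α)) * 2 * (2 * ((2*π) ^ θ * ‖x‖ ^ θ * ‖ξ‖ ^ θ)) := by
          apply mul_le_mul
          · exact mul_le_mul hwle (m_abs_le i j ξ) (abs_nonneg _) (Real.rpow_nonneg hξ0.le _)
          · rw [← hsplit]; exact hgb
          · exact abs_nonneg _
          · positivity
      _ ≤ ‖ξ‖ ^ (-(2+2*α)) * 2 * (2 * ((4 * π^2) * ‖x‖ ^ θ * ‖ξ‖ ^ θ)) := by
          have hr : (0:ℝ) ≤ ‖ξ‖ ^ (-(2+2*α)) := Real.rpow_nonneg hξ0.le _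
          have hx : (0:ℝ) ≤ ‖x‖ ^ θ := Real.rpow_nonneg (norm_nonneg x) _
          have hxi : (0:ℝ) ≤ ‖ξ‖ ^ θ := Real.rpow_nonneg hξ0.le _
          gcongr
      _ = 16 * π^2 * ‖x‖ ^ θ * (‖ξ‖ ^ (-(2+2*α)) * ‖ξ‖ ^ θ) := by ring
      _ = 16 * π^2 * ‖x‖ ^ θ * ‖ξ‖ ^ (-(2+ε)) := by
          rw [← Real.rpow_add hξ0]
          congr 1
          simp only [hθdef]
          ring_nf
  · have hχξ : χ ξ = 1 := hχ1 ξ (le_of_not_ge hc)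
    rw [Set.indicator_of_notMem (by exact hc), hχξ]
    simp

end KraichnanAux

open KraichnanAux

/-- `|(Q^δ(0) - Q^δ(x)) - (Q(0) - Q(x))| ≤ (C/ε) δ^ε |x|^{2α-ε}` entrywise,
with `C` depending only on `α` (independent of `δ`). -/
theorem mollified_Q_difference_bound (α ε : ℝ) (hα : α ∈ Set.Ioo (0:ℝ) 1)
    (hε : 0 < ε) (hε2 : ε < 2 * α) :
    ∃ C > 0, ∀ δ ∈ Set.Ioo (0:ℝ) 1,
      ∀ χ : EuclideanSpace ℝ (Fin 2) → ℝ,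
        ContDiff ℝ (⊤ : ℕ∞) χ →
        (∀ x y : EuclideanSpace ℝ (Fin 2), ‖x‖ = ‖y‖ → χ x = χ y) →
        (∀ ξ, χ ξ ∈ Set.Icc (0:ℝ) 1) →
        (∀ ξ : EuclideanSpace ℝ (Fin 2), ‖ξ‖ ≤ 1/δ → χ ξ = 1) →
        (∀ ξ : EuclideanSpace ℝ (Fin 2), 2/δ ≤ ‖ξ‖ → χ ξ = 0) →
        ∀ x : EuclideanSpace ℝ (Fin 2), ∀ i j : Fin 2,
          |(kraichnanQmollified α χ 0 i j - kraichnanQmollified α χ x i j)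
              - (kraichnanQ α 0 i j - kraichnanQ α x i j)|
            ≤ (C / ε) * δ ^ ε * ‖x‖ ^ (2 * α - ε) := by
  obtain ⟨hα0, hα1⟩ := hα
  have hvol : 0 < (volume (ball (0 : E2) 1)).toReal :=
    ENNReal.toReal_pos (measure_ball_pos volume 0 one_pos).ne' measure_ball_lt_top.ne
  refine ⟨32 * π^2 * (volume (ball (0 : E2) 1)).toReal,
    mul_pos (by positivity) hvol, ?_⟩
  rintro δ ⟨hδ0, hδ1⟩ χ hχsm _ hχIcc hχ1 _ x i j
  have hχcont : Continuous χ := hχsm.continuous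
  have hFy : ∀ y : E2, Integrable (fun ξ : E2 =>
      (1 + ‖ξ‖ ^ 2) ^ (-(1 + α)) * ((if i = j then (1:ℝ) else 0) - ξ i * ξ j / ‖ξ‖ ^ 2)
        * Real.cos (2 * π * (inner ℝ y ξ : ℝ))) := fun y =>
    integrable_integrand α hα0 i j (cos_meas y) (fun ξ => Real.abs_cos_le_one _)
  have hGy : ∀ y : E2, Integrable (fun ξ : E2 =>
      (1 + ‖ξ‖ ^ 2) ^ (-(1 + α)) * ((if i = j then (1:ℝ) else 0) - ξ i * ξ j / ‖ξ‖ ^ 2)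
        * (χ ξ) ^ 2 * Real.cos (2 * π * (inner ℝ y ξ : ℝ))) := by
    intro y
    have h := integrable_integrand α hα0 i j
      (g := fun ξ => (χ ξ)^2 * Real.cos (2 * π * (inner ℝ y ξ : ℝ)))
      ((hχcont.measurable.pow_const 2).mul (cos_meas y))
      (fun ξ => by
        rw [abs_mul]
        have h1 : |(χ ξ)^2| ≤ 1 := by
          obtain ⟨ha, hb⟩ := hχIcc ξ
          rw [abs_of_nonneg (by positivity)]
          nlinarith
        calc |(χ ξ)^2| * |Real.cos (2 * π * (inner ℝ y ξ : ℝ))| ≤ 1 * 1 :=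
              mul_le_mul h1 (Real.abs_cos_le_one _) (abs_nonneg _) one_pos.le
          _ = 1 := mul_one 1)
    simpa only [mul_assoc] using h
  have hpt : ∀ ξ : E2,
      ((1 + ‖ξ‖ ^ 2) ^ (-(1 + α)) * ((if i = j then (1:ℝ) else 0) - ξ i * ξ j / ‖ξ‖ ^ 2)
          * (χ ξ) ^ 2 * Real.cos (2 * π * (inner ℝ (0:E2) ξ : ℝ))
        - (1 + ‖ξ‖ ^ 2) ^ (-(1 + α)) * ((if i = j then (1:ℝ) else 0) - ξ i * ξ j / ‖ξ‖ ^ 2)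
          * (χ ξ) ^ 2 * Real.cos (2 * π * (inner ℝ x ξ : ℝ)))
      - ((1 + ‖ξ‖ ^ 2) ^ (-(1 + α)) * ((if i = j then (1:ℝ) else 0) - ξ i * ξ j / ‖ξ‖ ^ 2)
          * Real.cos (2 * π * (inner ℝ (0:E2) ξ : ℝ))
        - (1 + ‖ξ‖ ^ 2) ^ (-(1 + α)) * ((if i = j then (1:ℝ) else 0) - ξ i * ξ j / ‖ξ‖ ^ 2)
          * Real.cos (2 * π * (inner ℝ x ξ : ℝ)))
      = (1 + ‖ξ‖ ^ 2) ^ (-(1 + α)) * ((if i = j then (1:ℝ) else 0) - ξ i * ξ j / ‖ξ‖ ^ 2)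
          * (((χ ξ)^2 - 1) * (1 - Real.cos (2 * π * (inner ℝ x ξ : ℝ)))) := by
    intro ξ
    have h0 : (inner ℝ (0:E2) ξ : ℝ) = 0 := inner_zero_left ξ
    rw [h0, mul_zero, Real.cos_zero]
    ring
  have hkey : kraichnanQmollified α χ 0 i j - kraichnanQmollified α χ x i j
      - (kraichnanQ α 0 i j - kraichnanQ α x i j)
      = ∫ ξ : E2,
          (1 + ‖ξ‖ ^ 2) ^ (-(1 + α)) * ((if i = j then (1:ℝ) else 0) - ξ i * ξ j / ‖ξ‖ ^ 2)
            * (((χ ξ)^2 - 1) * (1 - Real.cos (2 * π * (inner ℝ x ξ : ℝ)))) := by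
    have hsub1 : Integrable (fun ξ : E2 =>
        (1 + ‖ξ‖ ^ 2) ^ (-(1 + α)) * ((if i = j then (1:ℝ) else 0) - ξ i * ξ j / ‖ξ‖ ^ 2)
          * (χ ξ) ^ 2 * Real.cos (2 * π * (inner ℝ (0:E2) ξ : ℝ))
        - (1 + ‖ξ‖ ^ 2) ^ (-(1 + α)) * ((if i = j then (1:ℝ) else 0) - ξ i * ξ j / ‖ξ‖ ^ 2)
          * (χ ξ) ^ 2 * Real.cos (2 * π * (inner ℝ x ξ : ℝ))) := (hGy 0).sub (hGy x)
    have hsub2 : Integrable (fun ξ : E2 =>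
        (1 + ‖ξ‖ ^ 2) ^ (-(1 + α)) * ((if i = j then (1:ℝ) else 0) - ξ i * ξ j / ‖ξ‖ ^ 2)
          * Real.cos (2 * π * (inner ℝ (0:E2) ξ : ℝ))
        - (1 + ‖ξ‖ ^ 2) ^ (-(1 + α)) * ((if i = j then (1:ℝ) else 0) - ξ i * ξ j / ‖ξ‖ ^ 2)
          * Real.cos (2 * π * (inner ℝ x ξ : ℝ))) := (hFy 0).sub (hFy x)
    simp only [kraichnanQmollified, kraichnanQ]
    rw [← integral_sub (hGy 0) (hGy x), ← integral_sub (hFy 0) (hFy x),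
      ← integral_sub hsub1 hsub2]
    exact integral_congr_ae (Filter.Eventually.of_forall hpt)
  have hhint : Integrable (fun ξ : E2 =>
      (1 + ‖ξ‖ ^ 2) ^ (-(1 + α)) * ((if i = j then (1:ℝ) else 0) - ξ i * ξ j / ‖ξ‖ ^ 2)
        * (((χ ξ)^2 - 1) * (1 - Real.cos (2 * π * (inner ℝ x ξ : ℝ))))) :=
    (((hGy 0).sub (hGy x)).sub ((hFy 0).sub (hFy x))).congr
      (Filter.Eventually.of_forall hpt)
  rw [hkey]
  have hδε : ((1:ℝ)/δ) ^ (-ε) = δ ^ ε := by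
    rw [one_div, Real.inv_rpow hδ0.le, Real.rpow_neg hδ0.le, inv_inv]
  calc |∫ ξ : E2,
        (1 + ‖ξ‖ ^ 2) ^ (-(1 + α)) * ((if i = j then (1:ℝ) else 0) - ξ i * ξ j / ‖ξ‖ ^ 2)
          * (((χ ξ)^2 - 1) * (1 - Real.cos (2 * π * (inner ℝ x ξ : ℝ))))|
      ≤ ∫ ξ : E2,
        |(1 + ‖ξ‖ ^ 2) ^ (-(1 + α)) * ((if i = j then (1:ℝ) else 0) - ξ i * ξ j / ‖ξ‖ ^ 2)
          * (((χ ξ)^2 - 1) * (1 - Real.cos (2 * π * (inner ℝ x ξ : ℝ))))| := by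
        exact abs_integral_le_integral_abs
    _ ≤ ∫ ξ : E2, 16 * π^2 * ‖x‖ ^ (2*α - ε) *
          Set.indicator {ξ : E2 | 1/δ ≤ ‖ξ‖} (fun ξ => ‖ξ‖ ^ (-(2+ε))) ξ := by
        apply integral_mono hhint.abs
          ((integrable_B ε δ hε hδ0 hδ1).const_mul _)
        exact fun ξ => pointwise_bound α ε δ hα0 hα1 hε hε2 hδ0 χ hχIcc hχ1 x i j ξ
    _ = 16 * π^2 * ‖x‖ ^ (2*α - ε) *
          ∫ ξ : E2, Set.indicator {ξ : E2 | 1/δ ≤ ‖ξ‖} (fun ξ => ‖ξ‖ ^ (-(2+ε))) ξ :=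
        integral_const_mul _ _
    _ = 16 * π^2 * ‖x‖ ^ (2*α - ε) *
          (2 * (volume (ball (0:E2) 1)).toReal * (((1:ℝ)/δ) ^ (-ε) / ε)) := by
        rw [radial_integral ε (1/δ) hε (by positivity)]
    _ = (32 * π^2 * (volume (ball (0:E2) 1)).toReal / ε) * δ ^ ε * ‖x‖ ^ (2 * α - ε) := by
        rw [hδε]; ring
end
end

section
/- Let β ∈ (1,2) and let φ ∈ C_c^∞(ℝ²). There exists a constant C > 0 (depending on φ and β) such that for all x ∈ ℝ²: | ∫_{ℝ²} |x−y|^{−β} ∇^⊥φ(y) dy | ≤ C (1+|x|²)^{−β/2}, where ∇^⊥φ = (∂₂φ, −∂₁φ). -/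
open MeasureTheory Real Metric Set
open scoped ENNReal NNReal

noncomputable section

/-- The rotated gradient `∇^⊥φ(y) = (∂₂φ(y), -∂₁φ(y))` as a vector in `ℝ²`. -/
def perpGrad (φ : EuclideanSpace ℝ (Fin 2) → ℝ) (y : EuclideanSpace ℝ (Fin 2)) :
    EuclideanSpace ℝ (Fin 2) :=
  (fderiv ℝ φ y (EuclideanSpace.single 1 (1:ℝ))) • EuclideanSpace.single (0 : Fin 2) (1:ℝ)
    - (fderiv ℝ φ y (EuclideanSpace.single 0 (1:ℝ))) • EuclideanSpace.single (1 : Fin 2) (1:ℝ)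

lemma exists_dyadic {t : ℝ} (ht : 1 < t) : ∃ n : ℕ, (2:ℝ)^n < t ∧ t ≤ 2^(n+1) := by
  classical
  have h : ∃ m : ℕ, t ≤ 2^m := by
    obtain ⟨m, hm⟩ := pow_unbounded_of_one_lt t (one_lt_two (α := ℝ))
    exact ⟨m, hm.le⟩
  have hm := Nat.find_spec h
  have hm0 : Nat.find h ≠ 0 := by
    intro h0
    rw [h0] at hm; simp at hm; linarith
  refine ⟨Nat.find h - 1, ?_, ?_⟩
  · have := Nat.find_min h (Nat.sub_lt (Nat.pos_of_ne_zero hm0) one_pos)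
    push_neg at this
    exact this
  · rw [Nat.sub_add_cancel (Nat.one_le_iff_ne_zero.2 hm0)]; exact hm

lemma pow_calc (β ρ : ℝ) (hρ : 0 < ρ) (n : ℕ) :
    (ρ / 2 ^ (n+1)) ^ (-β) * (ρ / 2 ^ n) ^ (2:ℕ) = (ρ ^ (2-β) * 2 ^ β) * ((2:ℝ) ^ (β-2)) ^ n := by
  have h2 : (0:ℝ) < 2 := two_pos
  have e1 : ρ / 2 ^ (n+1) = ρ * (2:ℝ) ^ (-((n:ℝ)+1)) := by
    rw [Real.rpow_neg h2.le, div_eq_mul_inv]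
    congr 1
    rw [← Real.rpow_natCast 2 (n+1)]
    push_cast; ring_nf
  have e2 : ρ / 2 ^ n = ρ * (2:ℝ) ^ (-(n:ℝ)) := by
    rw [Real.rpow_neg h2.le, div_eq_mul_inv]
    congr 1
    rw [← Real.rpow_natCast 2 n]
  have e3 : ((2:ℝ) ^ (β-2)) ^ n = (2:ℝ) ^ ((β-2)*(n:ℝ)) := by
    rw [← Real.rpow_natCast ((2:ℝ) ^ (β-2)) n, ← Real.rpow_mul h2.le]
  have e4 : (ρ / 2 ^ n) ^ (2:ℕ) = (ρ / 2 ^ n) ^ ((2:ℕ):ℝ) := (Real.rpow_natCast _ 2).symm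
  rw [e4, Nat.cast_ofNat, e1, e2, e3,
      Real.mul_rpow hρ.le (Real.rpow_nonneg h2.le _),
      Real.mul_rpow hρ.le (Real.rpow_nonneg h2.le _),
      ← Real.rpow_mul h2.le, ← Real.rpow_mul h2.le]
  rw [show ρ ^ (-β) * 2 ^ (-((n:ℝ) + 1) * -β) * (ρ ^ (2:ℝ) * 2 ^ (-(n:ℝ) * 2)) =
      (ρ ^ (-β) * ρ ^ (2:ℝ)) * (2 ^ (-((n:ℝ) + 1) * -β) * 2 ^ (-(n:ℝ) * 2)) from by ring,
    ← Real.rpow_add hρ, ← Real.rpow_add h2, mul_assoc, ← Real.rpow_add h2]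
  congr 1 <;> ring_nf

lemma lint_ball_lt_top {β : ℝ} (hβ1 : 0 < β) (hβ2 : β < 2) {ρ : ℝ} (hρ : 0 < ρ) :
    ∫⁻ z in Metric.ball (0 : EuclideanSpace ℝ (Fin 2)) ρ, ENNReal.ofReal (‖z‖ ^ (-β)) < ⊤ := by
  set E := EuclideanSpace ℝ (Fin 2)
  set g : E → ℝ≥0∞ := fun z => ENNReal.ofReal (‖z‖ ^ (-β)) with hg
  set A : ℕ → Set E := fun n => {z : E | ρ / 2^(n+1) ≤ ‖z‖} ∩ ball 0 (ρ / 2^n) with hA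
  have hcover : ball (0:E) ρ ⊆ {0} ∪ ⋃ n, A n := by
    intro z hz
    rcases eq_or_ne z 0 with rfl | hz0
    · exact Or.inl rfl
    have hz0' : 0 < ‖z‖ := norm_pos_iff.2 hz0
    have hzρ : ‖z‖ < ρ := by simpa [mem_ball_zero_iff] using hz
    obtain ⟨n, h1, h2⟩ := exists_dyadic (show 1 < ρ / ‖z‖ from (one_lt_div hz0').2 hzρ)
    refine Or.inr (Set.mem_iUnion.2 ⟨n, ?_, ?_⟩)
    · show ρ / 2^(n+1) ≤ ‖z‖
      rw [div_le_iff₀ (by positivity)]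
      calc ρ = (ρ / ‖z‖) * ‖z‖ := by field_simp
      _ ≤ 2^(n+1) * ‖z‖ := by nlinarith
      _ = ‖z‖ * 2^(n+1) := by ring
    · show z ∈ ball (0:E) (ρ / 2^n)
      rw [mem_ball_zero_iff, lt_div_iff₀ (by positivity)]
      calc ‖z‖ * 2^n < ‖z‖ * (ρ / ‖z‖) := by nlinarith
      _ = ρ := by field_simp
  have hbound : ∀ n, ∫⁻ z in A n, g z ∂volume ≤
      ENNReal.ofReal ((ρ / 2^(n+1)) ^ (-β)) * volume (A n) := by
    intro n
    rw [← setLIntegral_const (A n) _]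
    refine setLIntegral_mono (by fun_prop) fun z hz => ?_
    refine ENNReal.ofReal_le_ofReal ?_
    exact Real.rpow_le_rpow_of_nonpos (by positivity) hz.1 (by linarith)
  have hAvol : ∀ n, volume (A n) ≤
      ENNReal.ofReal ((ρ / 2^n) ^ (2:ℕ)) * volume (ball (0:EuclideanSpace ℝ (Fin 2)) 1) := by
    intro n
    calc volume (A n) ≤ volume (ball (0:E) (ρ / 2^n)) := measure_mono inter_subset_right
    _ = _ := by rw [Measure.addHaar_ball volume 0 (by positivity : (0:ℝ) ≤ ρ / 2^n)]; simp [E]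
  set B := volume (ball (0:EuclideanSpace ℝ (Fin 2)) 1) with hB
  have hBlt : B < ⊤ := measure_ball_lt_top
  have hterm : ∀ n, ∫⁻ z in A n, g z ∂volume ≤
      (ENNReal.ofReal (ρ ^ (2-β) * 2 ^ β) * B) * ENNReal.ofReal ((2:ℝ) ^ (β-2)) ^ n := by
    intro n
    calc ∫⁻ z in A n, g z ∂volume
        ≤ ENNReal.ofReal ((ρ / 2^(n+1)) ^ (-β)) * (ENNReal.ofReal ((ρ / 2^n) ^ (2:ℕ)) * B) := by
          exact le_trans (hbound n) (mul_le_mul_of_nonneg_left (hAvol n) (zero_le))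
      _ = ENNReal.ofReal ((ρ / 2^(n+1)) ^ (-β) * (ρ / 2^n) ^ (2:ℕ)) * B := by
          rw [ENNReal.ofReal_mul (by positivity), mul_assoc]
      _ = _ := by
          rw [pow_calc β ρ hρ n, ENNReal.ofReal_mul (by positivity),
            ENNReal.ofReal_pow (by positivity)]
          ring
  have hq : ENNReal.ofReal ((2:ℝ) ^ (β-2)) < 1 := by
    rw [← ENNReal.ofReal_one]
    exact ENNReal.ofReal_lt_ofReal_iff_of_nonneg (by positivity) |>.2
      (Real.rpow_lt_one_of_one_lt_of_neg one_lt_two (by linarith))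
  calc ∫⁻ z in ball (0:E) ρ, g z ∂volume
      ≤ ∫⁻ z in ({0} ∪ ⋃ n, A n : Set E), g z ∂volume := lintegral_mono_set hcover
    _ ≤ (∫⁻ z in ({0} : Set E), g z ∂volume) + ∫⁻ z in (⋃ n, A n), g z ∂volume :=
        lintegral_union_le _ _ _
    _ ≤ 0 + ∑' n, ∫⁻ z in A n, g z ∂volume := by
        gcongr
        · rw [setLIntegral_measure_zero _ _ (measure_singleton _)]
        · exact lintegral_iUnion_le _ _
    _ ≤ 0 + ∑' n, (ENNReal.ofReal (ρ ^ (2-β) * 2 ^ β) * B) * ENNReal.ofReal ((2:ℝ) ^ (β-2)) ^ n :=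
        by gcongr with n; exact hterm n
    _ = (ENNReal.ofReal (ρ ^ (2-β) * 2 ^ β) * B) * (1 - ENNReal.ofReal ((2:ℝ) ^ (β-2)))⁻¹ := by
        rw [zero_add, ENNReal.tsum_mul_left, ENNReal.tsum_geometric]
    _ < ⊤ := by
        apply ENNReal.mul_lt_top
        · exact ENNReal.mul_lt_top ENNReal.ofReal_lt_top hBlt
        · rw [ENNReal.inv_lt_top]
          exact tsub_pos_of_lt hq

lemma riesz_aux {β : ℝ} (hβ1 : 1 < β) (hβ2 : β < 2)
    (g : EuclideanSpace ℝ (Fin 2) → EuclideanSpace ℝ (Fin 2))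
    (hg_cont : Continuous g) (hg_supp : HasCompactSupport g) :
    ∃ C > 0, ∀ x : EuclideanSpace ℝ (Fin 2),
      ‖∫ y : EuclideanSpace ℝ (Fin 2), ‖x - y‖ ^ (-β) • g y‖
        ≤ C * (1 + ‖x‖ ^ 2) ^ (-β / 2) := by
  obtain ⟨M₀, hM₀⟩ := hg_supp.exists_bound_of_continuous hg_cont
  set M := max M₀ 0 with hMdef
  have hM : ∀ y, ‖g y‖ ≤ M := fun y => (hM₀ y).trans (le_max_left _ _)
  have hM0 : 0 ≤ M := le_max_right _ _
  obtain ⟨R₁, hR₁⟩ := hg_supp.isBounded.subset_closedBall 0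
  set R := max R₁ 1 with hRdef
  have hRsupp : tsupport g ⊆ closedBall (0 : EuclideanSpace ℝ (Fin 2)) R :=
    hR₁.trans (closedBall_subset_closedBall (le_max_left _ _))
  have hR1 : (1:ℝ) ≤ R := le_max_right _ _
  set r := max (2*R) 1 with hrdef
  have hr0 : (0:ℝ) < r := lt_of_lt_of_le one_pos (le_max_right _ _)
  set ρ := r + R + 1 with hρdef
  have hρ0 : (0:ℝ) < ρ := by positivity
  set I := ∫⁻ z in Metric.ball (0 : EuclideanSpace ℝ (Fin 2)) ρ,
    ENNReal.ofReal (‖z‖ ^ (-β)) with hIdef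
  have hI : I < ⊤ := lint_ball_lt_top (by linarith) hβ2 hρ0
  set V := (volume (closedBall (0 : EuclideanSpace ℝ (Fin 2)) R)).toReal with hVdef
  have hV0 : 0 ≤ V := ENNReal.toReal_nonneg
  set C₁ := (ENNReal.ofReal M * I).toReal * (1+r^2)^(β/2) with hC₁def
  set C₂ := (2:ℝ)^β * 2^(β/2) * M * V with hC₂def
  have hC₁0 : 0 ≤ C₁ := by positivity
  refine ⟨max C₁ C₂ + 1, by
    have := le_max_left C₁ C₂; linarith, fun x => ?_⟩
  have hRHSpos : (0:ℝ) < (1 + ‖x‖ ^ 2) ^ (-β / 2) :=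
    Real.rpow_pos_of_pos (by positivity) _
  have hCle : C₁ ≤ max C₁ C₂ + 1 := by have := le_max_left C₁ C₂; linarith
  have hCle2 : C₂ ≤ max C₁ C₂ + 1 := by have := le_max_right C₁ C₂; linarith
  have hnorm : ∀ y, ‖(‖x - y‖ ^ (-β)) • g y‖ = ‖x - y‖ ^ (-β) * ‖g y‖ := fun y => by
    rw [norm_smul, Real.norm_eq_abs, abs_of_nonneg (Real.rpow_nonneg (norm_nonneg _) _)]
  have key : ‖∫ y, (‖x - y‖ ^ (-β)) • g y‖
      ≤ (∫⁻ y, ENNReal.ofReal ‖(‖x - y‖ ^ (-β)) • g y‖).toReal :=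
    norm_integral_le_lintegral_norm _
  by_cases hx : ‖x‖ ≤ r
  · -- near regime
    have hb : ∀ y, ENNReal.ofReal ‖(‖x - y‖ ^ (-β)) • g y‖ ≤
        ENNReal.ofReal M *
          Set.indicator (Metric.ball (0 : EuclideanSpace ℝ (Fin 2)) ρ)
            (fun z => ENNReal.ofReal (‖z‖ ^ (-β))) (x - y) := by
      intro y
      rw [hnorm y]
      by_cases hy : g y = 0
      · simp [hy]
      · have hyR : ‖y‖ ≤ R := by
          have hyt : y ∈ tsupport g := subset_tsupport g (Function.mem_support.2 hy)
          simpa [mem_closedBall_zero_iff] using hRsupp hyt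
        have hmem : x - y ∈ Metric.ball (0 : EuclideanSpace ℝ (Fin 2)) ρ := by
          rw [mem_ball_zero_iff]
          calc ‖x - y‖ ≤ ‖x‖ + ‖y‖ := norm_sub_le x y
          _ ≤ r + R := add_le_add hx hyR
          _ < ρ := by rw [hρdef]; linarith
        rw [Set.indicator_of_mem hmem, ← ENNReal.ofReal_mul hM0]
        refine ENNReal.ofReal_le_ofReal ?_
        have h1 : (0:ℝ) ≤ ‖x - y‖ ^ (-β) := Real.rpow_nonneg (norm_nonneg _) _
        calc ‖x - y‖ ^ (-β) * ‖g y‖ ≤ ‖x - y‖ ^ (-β) * M :=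
              mul_le_mul_of_nonneg_left (hM y) h1
        _ = M * ‖x - y‖ ^ (-β) := mul_comm _ _
    have hmeas : Measurable (fun z : EuclideanSpace ℝ (Fin 2) =>
        Set.indicator (Metric.ball (0 : EuclideanSpace ℝ (Fin 2)) ρ)
          (fun z => ENNReal.ofReal (‖z‖ ^ (-β))) z) := by
      apply Measurable.indicator _ measurableSet_ball
      fun_prop
    have hchain : (∫⁻ y, ENNReal.ofReal ‖(‖x - y‖ ^ (-β)) • g y‖) ≤ ENNReal.ofReal M * I := by
      calc ∫⁻ y, ENNReal.ofReal ‖(‖x - y‖ ^ (-β)) • g y‖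
          ≤ ∫⁻ y, ENNReal.ofReal M *
            Set.indicator (Metric.ball (0 : EuclideanSpace ℝ (Fin 2)) ρ)
              (fun z => ENNReal.ofReal (‖z‖ ^ (-β))) (x - y) :=
            lintegral_mono hb
        _ = ENNReal.ofReal M * ∫⁻ y,
            Set.indicator (Metric.ball (0 : EuclideanSpace ℝ (Fin 2)) ρ)
              (fun z => ENNReal.ofReal (‖z‖ ^ (-β))) (x - y) :=
            lintegral_const_mul' _ _ ENNReal.ofReal_ne_top
        _ = ENNReal.ofReal M * ∫⁻ z,
            Set.indicator (Metric.ball (0 : EuclideanSpace ℝ (Fin 2)) ρ)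
              (fun z => ENNReal.ofReal (‖z‖ ^ (-β))) z := by
            rw [(Measure.measurePreserving_sub_left volume x).lintegral_comp hmeas]
        _ = ENNReal.ofReal M * I := by
            rw [lintegral_indicator measurableSet_ball]
    calc ‖∫ y, (‖x - y‖ ^ (-β)) • g y‖
        ≤ (∫⁻ y, ENNReal.ofReal ‖(‖x - y‖ ^ (-β)) • g y‖).toReal := key
      _ ≤ (ENNReal.ofReal M * I).toReal :=
          ENNReal.toReal_mono (ENNReal.mul_ne_top ENNReal.ofReal_ne_top hI.ne) hchain
      _ = C₁ * (1+r^2)^(-(β/2)) := by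
          rw [hC₁def, mul_assoc, ← Real.rpow_add (by positivity : (0:ℝ) < 1 + r^2)]
          simp
      _ ≤ C₁ * (1 + ‖x‖ ^ 2) ^ (-β / 2) := by
          rw [show (-β/2 : ℝ) = -(β/2) by ring]
          apply mul_le_mul_of_nonneg_left _ hC₁0
          apply Real.rpow_le_rpow_of_nonpos (by positivity) _ (by linarith)
          have : ‖x‖^2 ≤ r^2 := by nlinarith [norm_nonneg x]
          linarith
      _ ≤ (max C₁ C₂ + 1) * (1 + ‖x‖ ^ 2) ^ (-β / 2) :=
          mul_le_mul_of_nonneg_right hCle hRHSpos.le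
  · -- far regime
    push_neg at hx
    have hx1 : (1:ℝ) < ‖x‖ := lt_of_le_of_lt (le_max_right _ _) hx
    have hx2R : 2*R < ‖x‖ := lt_of_le_of_lt (le_max_left _ _) hx
    have hxpos : (0:ℝ) < ‖x‖ := by linarith
    have hb2 : ∀ y, ENNReal.ofReal ‖(‖x - y‖ ^ (-β)) • g y‖ ≤
        Set.indicator (closedBall (0 : EuclideanSpace ℝ (Fin 2)) R)
          (fun _ => ENNReal.ofReal ((‖x‖/2) ^ (-β) * M)) y := by
      intro y
      rw [hnorm y]
      by_cases hy : g y = 0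
      · simp [hy]
      · have hyR : ‖y‖ ≤ R := by
          have hyt : y ∈ tsupport g := subset_tsupport g (Function.mem_support.2 hy)
          simpa [mem_closedBall_zero_iff] using hRsupp hyt
        rw [Set.indicator_of_mem (mem_closedBall_zero_iff.2 hyR)]
        apply ENNReal.ofReal_le_ofReal
        have hxy : ‖x‖/2 ≤ ‖x - y‖ := by
          have h1 : ‖x‖ - ‖y‖ ≤ ‖x - y‖ := norm_sub_norm_le x y
          linarith
        have h1 : ‖x - y‖ ^ (-β) ≤ (‖x‖/2) ^ (-β) :=
          Real.rpow_le_rpow_of_nonpos (by positivity) hxy (by linarith)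
        exact mul_le_mul h1 (hM y) (norm_nonneg _) (by positivity)
    have hVne : volume (closedBall (0 : EuclideanSpace ℝ (Fin 2)) R) ≠ ⊤ :=
      measure_closedBall_lt_top.ne
    have hchain2 : (∫⁻ y, ENNReal.ofReal ‖(‖x - y‖ ^ (-β)) • g y‖) ≤
        ENNReal.ofReal ((‖x‖/2) ^ (-β) * M) *
          volume (closedBall (0 : EuclideanSpace ℝ (Fin 2)) R) := by
      calc ∫⁻ y, ENNReal.ofReal ‖(‖x - y‖ ^ (-β)) • g y‖
          ≤ ∫⁻ y, Set.indicator (closedBall (0 : EuclideanSpace ℝ (Fin 2)) R)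
              (fun _ => ENNReal.ofReal ((‖x‖/2) ^ (-β) * M)) y := lintegral_mono hb2
        _ = ∫⁻ _ in closedBall (0 : EuclideanSpace ℝ (Fin 2)) R,
              ENNReal.ofReal ((‖x‖/2) ^ (-β) * M) :=
            lintegral_indicator measurableSet_closedBall _
        _ = ENNReal.ofReal ((‖x‖/2) ^ (-β) * M) *
              volume (closedBall (0 : EuclideanSpace ℝ (Fin 2)) R) :=
            setLIntegral_const _ _
    have hstep : ‖∫ y, (‖x - y‖ ^ (-β)) • g y‖ ≤ (‖x‖/2) ^ (-β) * M * V := by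
      calc ‖∫ y, (‖x - y‖ ^ (-β)) • g y‖
          ≤ (∫⁻ y, ENNReal.ofReal ‖(‖x - y‖ ^ (-β)) • g y‖).toReal := key
        _ ≤ (ENNReal.ofReal ((‖x‖/2) ^ (-β) * M) *
              volume (closedBall (0 : EuclideanSpace ℝ (Fin 2)) R)).toReal :=
            ENNReal.toReal_mono (ENNReal.mul_ne_top ENNReal.ofReal_ne_top hVne) hchain2
        _ = (‖x‖/2) ^ (-β) * M * V := by
            rw [ENNReal.toReal_mul, ENNReal.toReal_ofReal (by positivity), hVdef]
    have hdiv : (‖x‖/2) ^ (-β) = 2^β * ‖x‖ ^ (-β) := by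
      rw [Real.div_rpow (norm_nonneg x) (by norm_num : (0:ℝ) ≤ 2),
        Real.rpow_neg (by norm_num : (0:ℝ) ≤ 2), div_eq_mul_inv, inv_inv, mul_comm]
    have hkey : ‖x‖ ^ (-β) ≤ 2^(β/2) * (1 + ‖x‖ ^ 2) ^ (-β/2) := by
      have hA : (0:ℝ) < ‖x‖ ^ β := Real.rpow_pos_of_pos hxpos β
      have hB : (0:ℝ) < (1 + ‖x‖^2) ^ (β/2) := Real.rpow_pos_of_pos (by positivity) _
      have hmain : (1 + ‖x‖^2) ^ (β/2) ≤ 2^(β/2) * ‖x‖ ^ β := by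
        have h1 : (1 + ‖x‖^2) ≤ 2 * ‖x‖^2 := by nlinarith
        calc (1 + ‖x‖^2) ^ (β/2) ≤ (2 * ‖x‖^2) ^ (β/2) :=
              Real.rpow_le_rpow (by positivity) h1 (by linarith)
          _ = 2^(β/2) * (‖x‖^2 : ℝ) ^ (β/2) := Real.mul_rpow (by norm_num) (by positivity)
          _ = 2^(β/2) * ‖x‖ ^ β := by
              congr 1
              rw [← Real.rpow_natCast ‖x‖ 2, ← Real.rpow_mul (norm_nonneg x)]
              push_cast
              rw [show (2:ℝ)*(β/2) = β by ring]
      rw [show (-β/2 : ℝ) = -(β/2) by ring, Real.rpow_neg (norm_nonneg x),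
        Real.rpow_neg (by positivity : (0:ℝ) ≤ 1 + ‖x‖^2), ← div_eq_mul_inv,
        le_div_iff₀ hB, inv_mul_eq_div, div_le_iff₀ hA]
      exact hmain
    calc ‖∫ y, (‖x - y‖ ^ (-β)) • g y‖
        ≤ (‖x‖/2) ^ (-β) * M * V := hstep
      _ = 2^β * ‖x‖ ^ (-β) * M * V := by rw [hdiv]
      _ ≤ 2^β * (2^(β/2) * (1 + ‖x‖ ^ 2) ^ (-β/2)) * M * V := by
          have h2 : (0:ℝ) ≤ (2:ℝ)^β := by positivity
          have h3 := mul_le_mul_of_nonneg_left hkey h2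
          exact mul_le_mul_of_nonneg_right (mul_le_mul_of_nonneg_right h3 hM0) hV0
      _ = C₂ * (1 + ‖x‖ ^ 2) ^ (-β / 2) := by rw [hC₂def]; ring
      _ ≤ (max C₁ C₂ + 1) * (1 + ‖x‖ ^ 2) ^ (-β / 2) :=
          mul_le_mul_of_nonneg_right hCle2 hRHSpos.le

/-- for `φ ∈ C_c^∞(ℝ²)` and `β ∈ (1,2)`,
`| ∫ |x-y|^{-β} ∇^⊥φ(y) dy | ≤ C (1+|x|²)^{-β/2}` for all `x`. -/
theorem riesz_convolution_perp_grad_decay (β : ℝ) (hβ : β ∈ Set.Ioo (1:ℝ) 2)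
    (φ : EuclideanSpace ℝ (Fin 2) → ℝ)
    (hφ : ContDiff ℝ (⊤ : ℕ∞) φ) (hφc : HasCompactSupport φ) :
    ∃ C > 0, ∀ x : EuclideanSpace ℝ (Fin 2),
      ‖∫ y : EuclideanSpace ℝ (Fin 2), ‖x - y‖ ^ (-β) • perpGrad φ y‖
        ≤ C * (1 + ‖x‖ ^ 2) ^ (-β / 2) := by
  obtain ⟨hβ1, hβ2⟩ := hβ
  have hfc : Continuous fun y => fderiv ℝ φ y := hφ.continuous_fderiv (by simp)
  have hg_cont : Continuous (perpGrad φ) := by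
    unfold perpGrad
    exact ((hfc.clm_apply continuous_const).smul continuous_const).sub
      ((hfc.clm_apply continuous_const).smul continuous_const)
  have hg_supp : HasCompactSupport (perpGrad φ) := by
    apply HasCompactSupport.mono' (hφc.fderiv ℝ)
    intro y hy
    apply subset_tsupport _
    intro h0
    apply hy
    show perpGrad φ y = 0
    unfold perpGrad
    rw [show fderiv ℝ φ y = 0 from h0]
    simp
  exact riesz_aux hβ1 hβ2 (perpGrad φ) hg_cont hg_supp

end
end
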